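/- Under the same extremal dynamics for two identical coupled spins (with optimal feedback B = μ(P₁×S₁+P₂×S₂) and κ = (P₁-P₂)·(S₁×S₂)), the scalar κ(t) is a constant of the motion. -/

import Mathlib

/-!
Write `D = P₁ - P₂`, so that `κ = D ⬝ᵥ S₁ ⨯₃ S₂` and `D' = μ D ⨯₃ B + κ D ⨯₃ (S₁ + S₂)`.
The `μ`-part of the flow moves all vectors by the same infinitesimal rotation `v ↦ v ⨯₃ B`,
which preserves triple products, whatever `B` is. In the `κ`-part the contribution of `D'`,
`(D ⬝ᵥ S₁)(S₁ ⬝ᵥ S₂ + |S₂|²) - (D ⬝ᵥ S₂)(|S₁|² + S₁ ⬝ᵥ S₂)` by Binet–Cauchy, cancels the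
contribution of `(S₁ ⨯₃ S₂)'` computed with the double cross product expansion.
-/

open Matrix

section TripleProduct

variable {R : Type*} [CommRing R]

theorem triple_product_infinitesimal_rotation (d a b ω : Fin 3 → R) :
    (d ⨯₃ ω) ⬝ᵥ (a ⨯₃ b) + d ⬝ᵥ (a ⨯₃ ω) ⨯₃ b + d ⬝ᵥ a ⨯₃ (b ⨯₃ ω) = 0 := by
  simp only [dotProduct, cross_apply, Fin.sum_univ_three, Fin.isValue, cons_val_zero, cons_val_one,
    cons_val]
  ring

theorem triple_product_exchange_coupling (d a b : Fin 3 → R) :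
    (d ⨯₃ a) ⬝ᵥ (a ⨯₃ b) + (d ⨯₃ b) ⬝ᵥ (a ⨯₃ b) + d ⬝ᵥ (a ⨯₃ b) ⨯₃ b + d ⬝ᵥ a ⨯₃ (b ⨯₃ a) = 0 := by
  simp only [dotProduct, cross_apply, Fin.sum_univ_three, Fin.isValue, cons_val_zero, cons_val_one,
    cons_val]
  ring

end TripleProduct

section Deriv

variable {𝕜 : Type*} [NontriviallyNormedField 𝕜] {u v w : 𝕜 → Fin 3 → 𝕜}
  {u' v' w' : Fin 3 → 𝕜} {t : 𝕜}

theorem HasDerivAt.dotProduct (hu : HasDerivAt u u' t) (hv : HasDerivAt v v' t) :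
    HasDerivAt (fun s => u s ⬝ᵥ v s) (u' ⬝ᵥ v t + u t ⬝ᵥ v') t := by
  simp only [_root_.dotProduct, ← Finset.sum_add_distrib]
  exact HasDerivAt.fun_sum fun i _ =>
    ((hasDerivAt_pi.1 hu i).mul (hasDerivAt_pi.1 hv i)).congr_deriv (by ring)

theorem HasDerivAt.cross (hu : HasDerivAt u u' t) (hv : HasDerivAt v v' t) :
    HasDerivAt (fun s => u s ⨯₃ v s) (u' ⨯₃ v t + u t ⨯₃ v') t := by
  have hu := hasDerivAt_pi.1 hu
  have hv := hasDerivAt_pi.1 hv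
  refine hasDerivAt_pi.2 fun i => ?_
  fin_cases i <;>
    simp only [Fin.zero_eta, Fin.mk_one, Fin.reduceFinMk, Fin.isValue, cross_apply, cons_val_zero,
      cons_val_one, cons_val, Pi.add_apply]
  all_goals exact (((hu _).mul (hv _)).sub ((hu _).mul (hv _))).congr_deriv (by ring)

theorem HasDerivAt.dotProduct_cross (hu : HasDerivAt u u' t) (hv : HasDerivAt v v' t)
    (hw : HasDerivAt w w' t) :
    HasDerivAt (fun s => u s ⬝ᵥ v s ⨯₃ w s)
      (u' ⬝ᵥ v t ⨯₃ w t + u t ⬝ᵥ (v' ⨯₃ w t + v t ⨯₃ w')) t :=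
  hu.dotProduct (hv.cross hw)

end Deriv

theorem extremal_coupled_kappa_constant_general (μ : ℝ)
    (S₁ S₂ P₁ P₂ : ℝ → Fin 3 → ℝ) (B : ℝ → Fin 3 → ℝ) (κ : ℝ → ℝ)
    (hκ : ∀ t : ℝ, κ t = (P₁ t - P₂ t) ⬝ᵥ crossProduct (S₁ t) (S₂ t))
    (hS₁ : ∀ t : ℝ, HasDerivAt S₁
      (μ • crossProduct (S₁ t) (B t) + κ t • crossProduct (S₁ t) (S₂ t)) t)
    (hS₂ : ∀ t : ℝ, HasDerivAt S₂
      (μ • crossProduct (S₂ t) (B t) + κ t • crossProduct (S₂ t) (S₁ t)) t)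
    (hP₁ : ∀ t : ℝ, HasDerivAt P₁
      (μ • crossProduct (P₁ t) (B t) + κ t • crossProduct (P₁ t - P₂ t) (S₂ t)) t)
    (hP₂ : ∀ t : ℝ, HasDerivAt P₂
      (μ • crossProduct (P₂ t) (B t) + κ t • crossProduct (P₂ t - P₁ t) (S₁ t)) t) :
    ∀ t : ℝ, κ t = κ 0 := by
  have hκ_deriv : ∀ t, HasDerivAt κ 0 t := by
    intro t
    have hD : HasDerivAt (fun s => P₁ s - P₂ s)
        (μ • (P₁ t - P₂ t) ⨯₃ B t + κ t • (P₁ t - P₂ t) ⨯₃ (S₁ t + S₂ t)) t :=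
      ((hP₁ t).sub (hP₂ t)).congr_deriv (by
        simp only [map_sub, map_add, LinearMap.sub_apply]
        module)
    rw [show κ = fun s => (P₁ s - P₂ s) ⬝ᵥ S₁ s ⨯₃ S₂ s from funext hκ]
    refine (hD.dotProduct_cross (hS₁ t) (hS₂ t)).congr_deriv ?_
    simp only [map_add, map_smul, LinearMap.add_apply, LinearMap.smul_apply, smul_dotProduct,
      dotProduct_smul, add_dotProduct, dotProduct_add, smul_eq_mul]
    linear_combination μ * triple_product_infinitesimal_rotation (P₁ t - P₂ t) (S₁ t) (S₂ t) (B t)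
      + κ t * triple_product_exchange_coupling (P₁ t - P₂ t) (S₁ t) (S₂ t)
  exact fun t => is_const_of_deriv_eq_zero (fun s => (hκ_deriv s).differentiableAt)
    (fun s => (hκ_deriv s).deriv) t 0

theorem extremal_coupled_kappa_constant (μ : ℝ)
    (S₁ S₂ P₁ P₂ : ℝ → Fin 3 → ℝ) (B : ℝ → Fin 3 → ℝ) (κ : ℝ → ℝ)
    (hB : ∀ t : ℝ, B t = μ • (crossProduct (P₁ t) (S₁ t) + crossProduct (P₂ t) (S₂ t)))
    (hκ : ∀ t : ℝ, κ t = (P₁ t - P₂ t) ⬝ᵥ crossProduct (S₁ t) (S₂ t))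
    (hS₁ : ∀ t : ℝ, HasDerivAt S₁
      (μ • crossProduct (S₁ t) (B t) + κ t • crossProduct (S₁ t) (S₂ t)) t)
    (hS₂ : ∀ t : ℝ, HasDerivAt S₂
      (μ • crossProduct (S₂ t) (B t) + κ t • crossProduct (S₂ t) (S₁ t)) t)
    (hP₁ : ∀ t : ℝ, HasDerivAt P₁
      (μ • crossProduct (P₁ t) (B t) + κ t • crossProduct (P₁ t - P₂ t) (S₂ t)) t)
    (hP₂ : ∀ t : ℝ, HasDerivAt P₂
      (μ • crossProduct (P₂ t) (B t) + κ t • crossProduct (P₂ t - P₁ t) (S₁ t)) t)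
    (hc₁ : ∀ t : ℝ, S₁ t ⬝ᵥ P₁ t = 0) (hc₂ : ∀ t : ℝ, S₂ t ⬝ᵥ P₂ t = 0) :
    ∀ t : ℝ, κ t = κ 0 :=
  extremal_coupled_kappa_constant_general μ S₁ S₂ P₁ P₂ B κ hκ hS₁ hS₂ hP₁ hP₂
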